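/- arXiv:2503.09246 — 3 statements merged into one kernel-verified Lean document; each statement's English description precedes it below -/
import Mathlib

section
/- Let u, v be ultrafilters on ℕ, let t = u ⊗ (v ⊗ v) be the iterated tensor product (an ultrafilter on ℕ × (ℕ × ℕ)), and let f : ℕ × ℕ → ℕ. If {(a, (b, c)) | f(a, b) ≠ f(a, c)} ∈ t, then the image of t under the map (a, (b, c)) ↦ (f(a, b), f(a, c)) is a Ramsey witness. -/
/-- The tensor product of ultrafilters: `A ∈ u ⊗ v ↔ {a | {b | (a,b) ∈ A} ∈ v} ∈ u`. -/
def Ultrafilter.tensor {α β : Type*} (u : Ultrafilter α) (v : Ultrafilter β) :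
    Ultrafilter (α × β) :=
  u.bind fun a => v.map fun b => (a, b)

/-- An ultrafilter on `ℕ × ℕ` is a Ramsey witness if every member contains `[H]²`
for some infinite `H ⊆ ℕ`. -/
def IsRamseyWitness (w : Ultrafilter (ℕ × ℕ)) : Prop :=
  ∀ A ∈ w, ∃ H : Set ℕ, H.Infinite ∧ ∀ h₁ ∈ H, ∀ h₂ ∈ H, h₁ < h₂ → (h₁, h₂) ∈ A

lemma mem_tensor' {α β : Type*} (u : Ultrafilter α) (v : Ultrafilter β) (S : Set (α × β)) :
    S ∈ u.tensor v ↔ {a | {b | (a, b) ∈ S} ∈ v} ∈ u := Iff.rfl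

theorem stmt_4 (u v : Ultrafilter ℕ) (f : ℕ × ℕ → ℕ)
    (h : {p : ℕ × (ℕ × ℕ) | f (p.1, p.2.1) ≠ f (p.1, p.2.2)} ∈ u.tensor (v.tensor v)) :
    IsRamseyWitness
      ((u.tensor (v.tensor v)).map fun p => (f (p.1, p.2.1), f (p.1, p.2.2))) := by
  intro A hA
  rw [Ultrafilter.mem_map] at hA
  set P : ℕ → ℕ → ℕ → Prop :=
    fun a b c => (f (a, b), f (a, c)) ∈ A ∧ f (a, b) ≠ f (a, c) with hP
  have hBA : {p : ℕ × (ℕ × ℕ) | P p.1 p.2.1 p.2.2} ∈ u.tensor (v.tensor v) :=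
    Filter.inter_mem hA h
  rw [mem_tensor'] at hBA
  obtain ⟨a, ha⟩ := Filter.nonempty_of_mem hBA
  rw [Set.mem_setOf_eq, mem_tensor'] at ha
  -- ha : {b | {c | P a b c} ∈ v} ∈ v
  set G : Set ℕ := {b | {c | P a b c} ∈ v} with hG
  -- unboundedness of f (a, ·) along v
  have hub : ∀ N : ℕ, {c | N < f (a, c)} ∈ v := by
    intro N
    by_contra hc
    have hle : {c | f (a, c) ≤ N} ∈ v := by
      have := (Ultrafilter.compl_mem_iff_notMem (s := {c | N < f (a, c)})).mpr hc
      convert this using 1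
      ext c; simp [not_lt]
    have hIic : Set.Iic N ∈ v.map (fun c => f (a, c)) := hle
    obtain ⟨k, -, hk⟩ := Ultrafilter.eq_pure_of_finite_mem (Set.finite_Iic N) hIic
    have hkv : {c | f (a, c) = k} ∈ v := by
      have : {k} ∈ v.map (fun c => f (a, c)) := by rw [hk]; exact rfl
      exact this
    obtain ⟨b, hbG, hbk⟩ := Filter.nonempty_of_mem (Filter.inter_mem ha hkv)
    obtain ⟨c, hcP, hck⟩ := Filter.nonempty_of_mem (Filter.inter_mem hbG hkv)
    exact hcP.2 (by rw [hbk, hck])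
  have key : ∀ s : Finset ℕ, (∀ b ∈ s, b ∈ G) → ∃ c, c ∈ G ∧
      ∀ b ∈ s, P a b c ∧ f (a, b) < f (a, c) := by
    intro s hs
    have h1 : (⋂ b ∈ s, {c | P a b c}) ∈ v :=
      (Filter.biInter_finset_mem s).mpr fun b hb => hs b hb
    have h2 : {c | s.sup (fun b => f (a, b)) < f (a, c)} ∈ v := hub _
    obtain ⟨c, hc⟩ := Filter.nonempty_of_mem (Filter.inter_mem ha (Filter.inter_mem h1 h2))
    refine ⟨c, hc.1, fun b hb => ⟨?_, ?_⟩⟩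
    · exact Set.mem_iInter₂.mp hc.2.1 b hb
    · exact lt_of_le_of_lt (Finset.le_sup (f := fun b => f (a, b)) hb) hc.2.2
  choose! g hg1 hg2 using key
  set F : ℕ → Finset ℕ := fun n => Nat.rec ∅ (fun _ s => insert (g s) s) n with hF
  have hFsucc : ∀ n, F (n + 1) = insert (g (F n)) (F n) := fun n => rfl
  have hFG : ∀ n, ∀ b ∈ F n, b ∈ G := by
    intro n
    induction n with
    | zero => intro b hb; simp [hF] at hb
    | succ n ih =>
      intro b hb
      rw [hFsucc, Finset.mem_insert] at hb
      rcases hb with rfl | hb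
      · exact hg1 (F n) ih
      · exact ih b hb
  have hFmono : ∀ i j, i ≤ j → F i ⊆ F j := by
    intro i j hij
    induction j with
    | zero => simp_all
    | succ j ih =>
      rcases Nat.lt_or_ge i (j + 1) with hlt | hge
      · exact (ih (Nat.lt_succ_iff.mp hlt)).trans
          (by rw [hFsucc]; exact Finset.subset_insert _ _)
      · have : i = j + 1 := le_antisymm hij hge
        subst this; exact subset_rfl
  set q : ℕ → ℕ := fun n => g (F n) with hq
  have hqmem : ∀ i j, i < j → q i ∈ F j := by
    intro i j hij
    apply hFmono (i + 1) j hij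
    rw [hFsucc, Finset.mem_insert]; left; rfl
  have hmain : ∀ i j, i < j → P a (q i) (q j) ∧ f (a, q i) < f (a, q j) :=
    fun i j hij => hg2 (F j) (hFG j) (q i) (hqmem i j hij)
  have smono : StrictMono (fun n => f (a, q n)) := fun i j hij => (hmain i j hij).2
  refine ⟨Set.range (fun n => f (a, q n)),
    Set.infinite_range_of_injective smono.injective, ?_⟩
  rintro h₁ ⟨i, rfl⟩ h₂ ⟨j, rfl⟩ hlt
  have h3 := (hmain i j (smono.lt_iff_lt.mp hlt)).1
  exact h3.1
end

section
/- Let u, v be nonprincipal ultrafilters on ℕ and let w be the image of the iterated tensor product u ⊗ (v ⊗ v) under the map (a, (b, c)) ↦ (2^a · 3^b, 2^a · 3^c). Then w is a Ramsey witness, but w is not a tensor square: there is no ultrafilter p on ℕ with w = p ⊗ p. In particular, the set of tensor squares of nonprincipal ultrafilters is a proper subset of the set of Ramsey witnesses. -/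
lemma mem_tensor_iff {α β : Type*} (u : Ultrafilter α) (v : Ultrafilter β) (s : Set (α × β)) :
    s ∈ u.tensor v ↔ {a | {b | (a, b) ∈ s} ∈ v} ∈ u := by
  rw [Ultrafilter.tensor]
  exact Filter.mem_bind'

/-- Key extraction lemma: from a nonprincipal ultrafilter, a large set `G`, and a family of
large sets `S a` for `a ∈ G`, extract a strictly increasing sequence inside `G` with
`h j ∈ S (h i)` for `i < j`. -/
lemma key_seq (p : Ultrafilter ℕ) (hp : ∀ A : Set ℕ, A.Finite → A ∉ p)
    (G : Set ℕ) (hG : G ∈ p) (S : ℕ → Set ℕ) (hS : ∀ a ∈ G, S a ∈ p) :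
    ∃ h : ℕ → ℕ, StrictMono h ∧ (∀ n, h n ∈ G) ∧ ∀ i j, i < j → h j ∈ S (h i) := by
  classical
  have hIoi : ∀ x : ℕ, Set.Ioi x ∈ p := by
    intro x
    rw [← Set.compl_Iic]
    exact (Ultrafilter.compl_mem_iff_notMem).2 (hp _ (Set.finite_Iic x))
  set S' : ℕ → Set ℕ := fun x => if x ∈ G then S x ∩ Set.Ioi x else Set.univ with hS'
  have hS'mem : ∀ x, S' x ∈ p := by
    intro x
    by_cases hx : x ∈ G
    · simp only [hS', if_pos hx]
      exact Filter.inter_mem (hS x hx) (hIoi x)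
    · simp only [hS', if_neg hx]
      exact Filter.univ_mem
  set T : Finset ℕ → Set ℕ := fun s => G ∩ ⋂ x ∈ s, S' x with hT
  have hTmem : ∀ s, T s ∈ p := fun s =>
    Filter.inter_mem hG ((Filter.biInter_finset_mem s).2 fun i _ => hS'mem i)
  have hTne : ∀ s, (T s).Nonempty := fun s => Filter.nonempty_of_mem (hTmem s)
  choose F hF using hTne
  -- the sequence of accumulated finsets
  let rec' : ℕ → Finset ℕ := fun n => Nat.rec (∅ : Finset ℕ) (fun _ s => insert (F s) s) n
  set h : ℕ → ℕ := fun n => F (rec' n) with hh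
  have hrecsucc : ∀ n, rec' (n + 1) = insert (h n) (rec' n) := fun n => rfl
  have hmono : ∀ {n m : ℕ}, n ≤ m → rec' n ⊆ rec' m := by
    intro n m hnm
    induction m with
    | zero => simp_all
    | succ m ih =>
      rcases Nat.lt_or_ge n (m + 1) with h1 | h1
      · have := ih (Nat.lt_succ_iff.mp h1)
        rw [hrecsucc]
        exact this.trans (Finset.subset_insert _ _)
      · have : n = m + 1 := le_antisymm hnm h1
        subst this; exact subset_rfl
  have hmem_rec : ∀ i j, i < j → h i ∈ rec' j := by
    intro i j hij
    have : h i ∈ rec' (i + 1) := by rw [hrecsucc]; exact Finset.mem_insert_self _ _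
    exact hmono hij this
  have hG' : ∀ n, h n ∈ G := fun n => (hF (rec' n)).1
  have hkey : ∀ i j, i < j → h j ∈ S (h i) ∩ Set.Ioi (h i) := by
    intro i j hij
    have h1 : h j ∈ ⋂ x ∈ rec' j, S' x := (hF (rec' j)).2
    have h2 : h j ∈ S' (h i) := Set.mem_iInter₂.mp h1 (h i) (hmem_rec i j hij)
    have h2' : h j ∈ if h i ∈ G then S (h i) ∩ Set.Ioi (h i) else Set.univ := h2
    rwa [if_pos (hG' i)] at h2'
  refine ⟨h, ?_, hG', fun i j hij => (hkey i j hij).1⟩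
  intro i j hij
  exact (hkey i j hij).2

/-- Ramsey witness from the key lemma, for a set presented via a nonprincipal ultrafilter:
if `G ∈ p` and `S a ∈ p` for `a ∈ G`, we get an infinite homogeneous set inside `G`. -/
lemma ramsey_of_key (p : Ultrafilter ℕ) (hp : ∀ A : Set ℕ, A.Finite → A ∉ p)
    (G : Set ℕ) (hG : G ∈ p) (S : ℕ → Set ℕ) (hS : ∀ a ∈ G, S a ∈ p) :
    ∃ H : Set ℕ, H.Infinite ∧ (∀ x ∈ H, x ∈ G) ∧
      ∀ x ∈ H, ∀ y ∈ H, x < y → y ∈ S x := by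
  obtain ⟨h, hmono, hGmem, hSmem⟩ := key_seq p hp G hG S hS
  refine ⟨Set.range h, Set.infinite_range_of_injective hmono.injective, ?_, ?_⟩
  · rintro x ⟨n, rfl⟩; exact hGmem n
  · rintro x ⟨i, rfl⟩ y ⟨j, rfl⟩ hxy
    exact hSmem i j (hmono.lt_iff_lt.mp hxy)

lemma const_mem_iff {α : Type*} (q : Ultrafilter α) (P : Prop) :
    ({_x : α | P} ∈ q) ↔ P := by
  refine ⟨fun h => ?_, fun h => ?_⟩
  · by_contra hP
    rw [show {_x : α | P} = (∅ : Set α) from by simp [hP]] at h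
    exact Filter.empty_notMem _ h
  · rw [show {_x : α | P} = (Set.univ : Set α) from by simp [h]]
    exact Filter.univ_mem

lemma fact2 (a b : ℕ) : (2 ^ a * 3 ^ b).factorization 2 = a := by
  simp [Nat.factorization_mul, Nat.factorization_pow,
    Nat.Prime.factorization (by norm_num : Nat.Prime 2),
    Nat.Prime.factorization (by norm_num : Nat.Prime 3)]

/-- The pushforward of `u ⊗ (v ⊗ v)` under `(a,(b,c)) ↦ (2^a·3^b, 2^a·3^c)` is a
Ramsey witness which is not a tensor square; in particular the set of tensor squares of
nonprincipal ultrafilters is a proper subset of the set of Ramsey witnesses. -/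
theorem stmt_5 (u v : Ultrafilter ℕ)
    (hu : ∀ A : Set ℕ, A.Finite → A ∉ u) (hv : ∀ A : Set ℕ, A.Finite → A ∉ v) :
    IsRamseyWitness
      ((u.tensor (v.tensor v)).map fun p => (2 ^ p.1 * 3 ^ p.2.1, 2 ^ p.1 * 3 ^ p.2.2)) ∧
    (¬ ∃ p : Ultrafilter ℕ,
      (u.tensor (v.tensor v)).map
          (fun p => (2 ^ p.1 * 3 ^ p.2.1, 2 ^ p.1 * 3 ^ p.2.2)) = p.tensor p) ∧
    {w : Ultrafilter (ℕ × ℕ) |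
        ∃ p : Ultrafilter ℕ, (∀ A : Set ℕ, A.Finite → A ∉ p) ∧ w = p.tensor p} ⊂
      {w : Ultrafilter (ℕ × ℕ) | IsRamseyWitness w} := by
  set f : ℕ × (ℕ × ℕ) → ℕ × ℕ := fun p => (2 ^ p.1 * 3 ^ p.2.1, 2 ^ p.1 * 3 ^ p.2.2) with hf
  set w : Ultrafilter (ℕ × ℕ) := (u.tensor (v.tensor v)).map f with hw
  -- Part 1: w is a Ramsey witness
  have part1 : IsRamseyWitness w := by
    intro A hA
    rw [hw, Ultrafilter.mem_map, mem_tensor_iff] at hA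
    obtain ⟨a, ha⟩ := Filter.nonempty_of_mem hA
    rw [Set.mem_setOf_eq, mem_tensor_iff] at ha
    -- ha : {b | {c | (a,(b,c)) ∈ f ⁻¹' A} ∈ v} ∈ v
    obtain ⟨H, hHinf, hHG, hHS⟩ := ramsey_of_key v hv _ ha
      (fun b => {c | (a, (b, c)) ∈ f ⁻¹' A}) (fun b hb => hb)
    refine ⟨(fun n => 2 ^ a * 3 ^ n) '' H, ?_, ?_⟩
    · apply Set.Infinite.image ?_ hHinf
      intro x _ y _ hxy
      have h3 : StrictMono (fun n : ℕ => 2 ^ a * 3 ^ n) := by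
        intro s t hst
        have h3s : (3:ℕ) ^ s < 3 ^ t := Nat.pow_lt_pow_right (by norm_num : 1 < 3) hst
        have h2a : (0:ℕ) < 2 ^ a := by positivity
        exact Nat.mul_lt_mul_of_le_of_lt (le_refl (2 ^ a)) h3s h2a
      exact h3.injective hxy
    · rintro h₁ ⟨b, hb, rfl⟩ h₂ ⟨c, hc, rfl⟩ hlt
      have hlt' : (2:ℕ) ^ a * 3 ^ b < 2 ^ a * 3 ^ c := hlt
      have hbc : b < c := by
        by_contra hbc
        push_neg at hbc
        have : (2:ℕ) ^ a * 3 ^ c ≤ 2 ^ a * 3 ^ b :=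
          Nat.mul_le_mul_left _ (Nat.pow_le_pow_right (by norm_num) hbc)
        omega
      exact hHS b hb c hc hbc
  -- Part 2: w is not a tensor square
  have part2 : ¬ ∃ p : Ultrafilter ℕ, w = p.tensor p := by
    rintro ⟨p, hp⟩
    set e : ℕ → ℕ := fun n => n.factorization 2 with he
    have hD : {q : ℕ × ℕ | e q.1 = e q.2} ∈ w := by
      rw [hw, Ultrafilter.mem_map]
      have : f ⁻¹' {q : ℕ × ℕ | e q.1 = e q.2} = Set.univ := by
        ext ⟨a, b, c⟩
        simp only [hf, he, Set.mem_preimage, Set.mem_setOf_eq, Set.mem_univ, iff_true]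
        rw [fact2, fact2]
      rw [this]
      exact Filter.univ_mem
    rw [hp, mem_tensor_iff] at hD
    obtain ⟨x, hx⟩ := Filter.nonempty_of_mem hD
    rw [Set.mem_setOf_eq] at hx
    -- hx : {y | e x = e y} ∈ p
    -- but p is the first-coordinate projection of w
    have hproj : ∀ B : Set ℕ, B ∈ p → (fun q : ℕ × ℕ => q.1) ⁻¹' B ∈ w := by
      intro B hB
      rw [hp, mem_tensor_iff]
      have : {a | {b | (a, b) ∈ (fun q : ℕ × ℕ => q.1) ⁻¹' B} ∈ p} = B := by
        ext a
        have : {b : ℕ | (a, b) ∈ (fun q : ℕ × ℕ => q.1) ⁻¹' B} = {_b : ℕ | a ∈ B} := rfl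
        rw [Set.mem_setOf_eq, this, const_mem_iff]
      rw [this]
      exact hB
    have hBp : {y | e x = e y} ∈ p := hx
    have hWmem := hproj _ hBp
    rw [hw, Ultrafilter.mem_map, mem_tensor_iff] at hWmem
    have heq : {a | {bc : ℕ × ℕ | (a, bc) ∈ f ⁻¹' ((fun q : ℕ × ℕ => q.1) ⁻¹' {y | e x = e y})} ∈ v.tensor v}
        = {e x} := by
      ext a
      have hinner : {bc : ℕ × ℕ | (a, bc) ∈ f ⁻¹' ((fun q : ℕ × ℕ => q.1) ⁻¹' {y | e x = e y})}
          = {_bc : ℕ × ℕ | e x = a} := by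
        ext ⟨b, c⟩
        simp only [hf, he, Set.mem_preimage, Set.mem_setOf_eq]
        rw [fact2]
      rw [Set.mem_setOf_eq, hinner, const_mem_iff, Set.mem_singleton_iff, eq_comm]
    rw [heq] at hWmem
    exact hu {e x} (Set.finite_singleton _) hWmem
  refine ⟨part1, part2, ?_⟩
  constructor
  · -- tensor squares of nonprincipal ultrafilters are Ramsey witnesses
    rintro w' ⟨p, hp, rfl⟩
    intro A hA
    rw [mem_tensor_iff] at hA
    obtain ⟨H, hHinf, hHG, hHS⟩ := ramsey_of_key p hp _ hA
      (fun a => {b | (a, b) ∈ A}) (fun a ha => ha)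
    exact ⟨H, hHinf, hHS⟩
  · -- w is a Ramsey witness but not a tensor square
    intro hsub
    have := hsub part1
    obtain ⟨p, _, hpw⟩ := this
    exact part2 ⟨p, hpw⟩
end

section
/- Let f : ℕ → ℕ be arbitrary, let m ≥ 2 be a natural number, let d ≥ 1 be a natural number, and let g : ℕ × ℕ → ℕ and h₀, h₁ : ℕ → ℕ be such that for all a ≥ 1 and all b ≥ 1 one has 1 ≤ h₀(a), (h₀(a))^d · b ≤ (g(a, b))^d, and g(a, b) ≤ h₁(a) · b^d (i.e. h₀(a)·b^{1/d} ≤ g(a, b) ≤ h₁(a)·b^d). Then for every Ramsey witness w on ℕ × ℕ, the image of w under the map (a, b) ↦ f(a) · m^b is different from the image of w under g (as ultrafilters on ℕ). -/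
theorem Ultrafilter.eventually_comp_eq_of_map_eq {α β γ : Type*} [Finite γ] {u : Ultrafilter α}
    {F G : α → β} (h : u.map F = u.map G) (χ : β → γ) :
    ∀ᶠ x in (u : Filter α), χ (F x) = χ (G x) := by
  obtain ⟨c, hc⟩ := (u.map (χ ∘ F)).eq_pure_of_finite
  have hcG : u.map (χ ∘ G) = pure c := by
    rw [← Ultrafilter.map_map, ← h, Ultrafilter.map_map, hc]
  have hF : ∀ᶠ x in (u : Filter α), χ (F x) = c :=
    Ultrafilter.mem_map.mp (show {c} ∈ u.map (χ ∘ F) by rw [hc]; exact rfl)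
  have hG : ∀ᶠ x in (u : Filter α), χ (G x) = c :=
    Ultrafilter.mem_map.mp (show {c} ∈ u.map (χ ∘ G) by rw [hcG]; exact rfl)
  filter_upwards [hF, hG] with x hFx hGx using hFx.trans hGx.symm

namespace Nat

theorem log_mul_pow {m n : ℕ} (hm : 1 < m) (hn : n ≠ 0) (k : ℕ) :
    log m (n * m ^ k) = log m n + k := by
  induction k with
  | zero => simp
  | succ k ih =>
    rw [pow_succ, ← mul_assoc, log_mul_base hm (by positivity), ih, add_assoc]

theorem log_lt_mul_succ_log_of_le_pow {m d b G : ℕ} (hm : 1 < m) (hd : d ≠ 0)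
    (h : b ≤ G ^ d) :
    log m b < d * (log m G + 1) := by
  refine log_lt_of_lt_pow' (by positivity) (h.trans_lt ?_)
  rw [mul_comm, pow_mul]
  exact Nat.pow_lt_pow_left (lt_pow_succ_log_self hm G) hd

theorem log_le_of_le_mul_pow {m d b c G : ℕ} (hm : 1 < m) (h : G ≤ c * b ^ d) :
    log m G ≤ log m c + d * log m b + d := by
  have hbd : b ^ d ≤ m ^ (d * (log m b + 1)) := by
    rw [mul_comm, pow_mul]
    exact Nat.pow_le_pow_left (lt_pow_succ_log_self hm b).le d
  have hG : G < m ^ (log m c + 1 + d * (log m b + 1)) := by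
    rw [pow_add]
    exact h.trans_lt (Nat.mul_lt_mul_of_lt_of_le (lt_pow_succ_log_self hm c) hbd (by positivity))
  have := log_lt_of_lt_pow' (by positivity) hG
  linarith

theorem mul_succ_le_two_pow (A : ℕ) {s : ℕ} (hs : 2 * A + 2 ≤ s) : A * (s + 1) ≤ 2 ^ s := by
  induction s, hs using Nat.le_induction with
  | base =>
    have hA : A + 1 ≤ 2 ^ A := Nat.lt_two_pow_self
    rw [show 2 * A + 2 = A + A + 2 by ring, pow_add, pow_add]
    nlinarith
  | succ s _ ih =>
    rw [pow_succ]
    nlinarith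

theorem exists_mul_succ_le_pow_div {m K : ℕ} (hm : 2 ≤ m) (hK : 0 < K) (A : ℕ) :
    ∃ t₀, ∀ t, t₀ ≤ t → A * (t + 1) ≤ m ^ (t / K) := by
  refine ⟨K * (2 * (A * K) + 2), fun t ht => ?_⟩
  have hs : 2 * (A * K) + 2 ≤ t / K := (Nat.le_div_iff_mul_le hK).mpr (by linarith)
  calc A * (t + 1) ≤ A * (K * (t / K + 1)) := Nat.mul_le_mul_left A (Nat.lt_mul_div_succ t hK)
    _ = A * K * (t / K + 1) := by ring
    _ ≤ 2 ^ (t / K) := mul_succ_le_two_pow _ hs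
    _ ≤ m ^ (t / K) := Nat.pow_le_pow_left hm _

end Nat

def tower (m K t₀ : ℕ) : ℕ → ℕ
  | 0 => t₀
  | j + 1 => m ^ (tower m K t₀ j / K)

def towerLevel (T : ℕ → ℕ) (n : ℕ) : ℕ :=
  Nat.findGreatest (fun j => T j ≤ n) n

theorem towerLevel_spec {T : ℕ → ℕ} (hT : StrictMono T) {i n : ℕ} (h : T i ≤ n) :
    i ≤ towerLevel T n ∧ T (towerLevel T n) ≤ n ∧ n < T (towerLevel T n + 1) := by
  have hin : i ≤ n := hT.le_apply.trans h
  refine ⟨Nat.le_findGreatest hin h, Nat.findGreatest_spec (P := fun j => T j ≤ n) hin h, ?_⟩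
  by_contra! hle
  exact Nat.findGreatest_is_greatest (Nat.lt_succ_self _) (hT.le_apply.trans hle) hle

section tower

variable {m K t₀ A : ℕ}

theorem mul_tower_succ_le (hA : 0 < A) (ht₀ : ∀ t, t₀ ≤ t → A * (t + 1) ≤ m ^ (t / K))
    (j : ℕ) :
    A * (tower m K t₀ j + 1) ≤ tower m K t₀ (j + 1) := by
  suffices t₀ ≤ tower m K t₀ j from ht₀ _ this
  induction j with
  | zero => exact le_rfl
  | succ j ih =>
    change t₀ ≤ m ^ (tower m K t₀ j / K)
    nlinarith [ht₀ _ ih]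

theorem strictMono_tower (hA : 0 < A) (ht₀ : ∀ t, t₀ ≤ t → A * (t + 1) ≤ m ^ (t / K)) :
    StrictMono (tower m K t₀) :=
  strictMono_nat_of_lt_succ fun j => by nlinarith [mul_tower_succ_le hA ht₀ j]

theorem tower_le_and_lt_tower_of_log_comparable (hm : 1 < m) (hK : 0 < K)
    (ht₀ : ∀ t, t₀ ≤ t → K * (K + 1) * (t + 1) ≤ m ^ (t / K)) {j x y : ℕ}
    (hy : tower m K t₀ (j + 2) ≤ y) (hy' : y < tower m K t₀ (j + 3))
    (hyx : Nat.log m y ≤ K * (x + 1)) (hxy : x ≤ K * Nat.log m y) :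
    tower m K t₀ j ≤ x ∧ x < tower m K t₀ (j + 2) := by
  set T := tower m K t₀
  have hT := strictMono_tower (by positivity) ht₀
  constructor
  · have hlog : T (j + 1) / K ≤ Nat.log m y := Nat.le_log_of_pow_le hm hy
    have hgrow : K * (K + 1) * (T j + 1) ≤ T (j + 1) := mul_tower_succ_le (by positivity) ht₀ j
    have hlt : T (j + 1) < K * (K * (x + 1) + 1) :=
      (Nat.lt_mul_div_succ _ hK).trans_le (Nat.mul_le_mul_left K (by omega))
    have : K * (K + 1) * (T j + 1) < K * (K + 1) * (x + 1) := by nlinarith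
    have := Nat.lt_of_mul_lt_mul_left this
    omega
  · have hy0 : y ≠ 0 := (Nat.zero_le _).trans_lt (hT (Nat.lt_succ_self _) |>.trans_le hy) |>.ne'
    have hlog : Nat.log m y < T (j + 2) / K := Nat.log_lt_of_lt_pow hy0 hy'
    have := Nat.div_mul_le_self (T (j + 2)) K
    nlinarith

end tower

theorem exists_coloring_ne_of_log_comparable {m K : ℕ} (hm : 2 ≤ m) (hK : 0 < K) :
    ∃ (c : ℕ → Fin 3) (N : ℕ), ∀ x y, N ≤ y → Nat.log m y ≤ K * (x + 1) →
      x ≤ K * Nat.log m y → c x ≠ c y := by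
  obtain ⟨t₀, ht₀⟩ := Nat.exists_mul_succ_le_pow_div hm hK (K * (K + 1))
  have hT := strictMono_tower (by positivity) ht₀
  refine ⟨fun n => ⟨towerLevel (tower m K t₀) n % 3, Nat.mod_lt _ (by norm_num)⟩,
    tower m K t₀ 2, fun x y hy hyx hxy => ?_⟩
  obtain ⟨hy2, hTy, hyT⟩ := towerLevel_spec hT hy
  obtain ⟨j, hj⟩ : ∃ j, towerLevel (tower m K t₀) y = j + 2 :=
    ⟨_, (Nat.sub_add_cancel hy2).symm⟩
  rw [hj] at hTy hyT
  obtain ⟨hTx, hxT⟩ := tower_le_and_lt_tower_of_log_comparable hm hK ht₀ hTy hyT hyx hxy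
  obtain ⟨hjx, hTlx, -⟩ := towerLevel_spec hT hTx
  have hlx : towerLevel (tower m K t₀) x < j + 2 := hT.lt_iff_lt.mp (hTlx.trans_lt hxT)
  simp only [ne_eq, Fin.mk.injEq, hj]
  omega

theorem log_log_comparable_of_bounds {m d n b c G : ℕ} (hm : 1 < m) (hd : d ≠ 0) (hn : n ≠ 0)
    (hnb : Nat.log m n ≤ b) (hcb : m ^ (Nat.log m c + d) ≤ b) (hlow : b ≤ G ^ d)
    (hup : G ≤ c * b ^ d) :
    Nat.log m (Nat.log m (n * m ^ b)) ≤ (d + 1) * (Nat.log m G + 1) ∧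
      Nat.log m G ≤ (d + 1) * Nat.log m (Nat.log m (n * m ^ b)) := by
  have hb : b ≠ 0 := (Nat.pow_pos (by omega)).trans_le hcb |>.ne'
  rw [Nat.log_mul_pow hm hn]
  have hy_le : Nat.log m (Nat.log m n + b) ≤ Nat.log m b + 1 := by
    rw [← Nat.log_mul_base hm hb]
    exact Nat.log_mono_right (by nlinarith)
  have hy_ge : Nat.log m b ≤ Nat.log m (Nat.log m n + b) := Nat.log_mono_right (by omega)
  have hlogb : Nat.log m c + d ≤ Nat.log m b := Nat.le_log_of_pow_le hm hcb
  have hbG := Nat.log_lt_mul_succ_log_of_le_pow hm hd hlow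
  have hGb := Nat.log_le_of_le_mul_pow hm hup
  constructor <;> nlinarith

/-- If `g(a,b)` is polynomially bounded above and below in `b` (uniformly via `h₁, h₀`),
then no Ramsey witness identifies `(a,b) ↦ f(a)·m^b` with `g`. -/
theorem stmt_19 (f : ℕ → ℕ) (m d : ℕ) (hm : 2 ≤ m) (hd : 1 ≤ d)
    (g : ℕ × ℕ → ℕ) (h₀ h₁ : ℕ → ℕ)
    (hbounds : ∀ a b : ℕ, 1 ≤ a → 1 ≤ b →
      1 ≤ h₀ a ∧ (h₀ a) ^ d * b ≤ (g (a, b)) ^ d ∧ g (a, b) ≤ h₁ a * b ^ d)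
    (w : Ultrafilter (ℕ × ℕ)) (hw : IsRamseyWitness w) :
    (w.map fun p => f p.1 * m ^ p.2) ≠ w.map g := by
  intro heq
  have hm₁ : 1 < m := hm
  have hd₀ : d ≠ 0 := by omega
  obtain ⟨c, N, hc⟩ := exists_coloring_ne_of_log_comparable (K := d + 1) hm d.succ_pos
  -- the second colouring isolates `0`, where `Nat.log` gives no information
  obtain ⟨H, hH, hpair⟩ := hw _ <|
    (Ultrafilter.eventually_comp_eq_of_map_eq heq fun n => c (Nat.log m n)).and
      (Ultrafilter.eventually_comp_eq_of_map_eq heq fun n => decide (n = 0))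
  obtain ⟨a, haH, ha⟩ := hH.exists_gt 0
  obtain ⟨b, hbH, hb⟩ := hH.exists_gt (a + Nat.log m (f a) + m ^ (Nat.log m (h₁ a) + d) + N)
  obtain ⟨hcol, hzero⟩ := hpair a haH b hbH (by omega)
  obtain ⟨hh₀, hlow, hup⟩ := hbounds a b (by omega) (by omega)
  have hbg : b ≤ g (a, b) ^ d := le_trans (Nat.le_mul_of_pos_left b (Nat.pow_pos hh₀)) hlow
  have hg : g (a, b) ≠ 0 := by rintro hg; simp [hg, hd₀] at hbg; omega
  have hf : f a ≠ 0 := by rintro hf; simp [hf, hg] at hzero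
  obtain ⟨hyx, hxy⟩ :=
    log_log_comparable_of_bounds (c := h₁ a) hm₁ hd₀ hf (by omega) (by omega) hbg hup
  refine hc _ _ ?_ hyx hxy hcol.symm
  rw [Nat.log_mul_pow hm₁ hf]
  omega
end
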